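/- arXiv:2207.00310 — 2 statements merged into one kernel-verified Lean document; each statement's English description precedes it below -/
import Mathlib

section
/- Let ρ: ℝ^d → ℝ be a norm and A_1,…,A_p ⊆ {1,…,d} be subsets whose union is {1,…,d}, and let τ_1,…,τ_p > 0. Define ‖β‖_τ = inf{ ∑_{j=1}^p τ_j ρ(γ_j) : ∑_j γ_j = β, supp(γ_j) ⊆ A_j }. Then ‖·‖_τ is a norm on ℝ^d. -/
/-!
Supports are generalized to subspaces `V j`; those of vectors supported on `A j` span `ℝ^d`
because the `A j` cover, so every `β` has decompositions and `‖β‖_τ` is the infimum of a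
nonempty set of nonnegative costs (not the junk value `sInf ∅ = 0`). Scaling a decomposition by
`c` scales its cost by `‖c‖`, and decompositions of `β` and `β'` add up to one of `β + β'` of
cost at most the sum of the two, by the triangle inequality for `ρ`; passing to the infimum
makes `‖·‖_τ` a seminorm. It is definite because `ρ β ≤ ∑ j, ρ (γ j)` gives
`‖β‖_τ ≥ (min_j τ_j) ρ(β)`.
-/

open Finset

section LatentNorm

variable {𝕜 E ι : Type*} [NormedField 𝕜] [AddCommGroup E] [Module 𝕜 E] [Fintype ι]
  (ρ : Seminorm 𝕜 E) (τ : ι → ℝ) (V : ι → Submodule 𝕜 E)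

def latentCosts (β : E) : Set ℝ :=
  {s | ∃ γ : ι → E, ∑ j, γ j = β ∧ (∀ j, γ j ∈ V j) ∧ s = ∑ j, τ j * ρ (γ j)}

noncomputable def latentNorm (β : E) : ℝ :=
  sInf (latentCosts ρ τ V β)

variable {ρ τ V}

lemma latentCosts_nonempty (hV : ⨆ j, V j = ⊤) (β : E) : (latentCosts ρ τ V β).Nonempty := by
  have hβ : β ∈ ⨆ j, V j := hV ▸ Submodule.mem_top
  obtain ⟨γ, hγV, hγ⟩ := (Submodule.mem_iSup_iff_exists_finsupp V β).mp hβ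
  exact ⟨_, γ, by rwa [Finsupp.sum_fintype _ _ fun _ => rfl] at hγ, hγV, rfl⟩

lemma zero_mem_latentCosts_zero : (0 : ℝ) ∈ latentCosts ρ τ V 0 :=
  ⟨0, by simp, fun j => zero_mem (V j), by simp⟩

lemma nonneg_of_mem_latentCosts (hτ : ∀ j, 0 ≤ τ j) {β : E} {s : ℝ}
    (hs : s ∈ latentCosts ρ τ V β) : 0 ≤ s := by
  obtain ⟨γ, -, -, rfl⟩ := hs
  exact sum_nonneg fun j _ => mul_nonneg (hτ j) (apply_nonneg ρ _)

lemma bddBelow_latentCosts (hτ : ∀ j, 0 ≤ τ j) (β : E) : BddBelow (latentCosts ρ τ V β) :=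
  ⟨0, fun _ => nonneg_of_mem_latentCosts hτ⟩

lemma smul_mem_latentCosts (c : 𝕜) {β : E} {s : ℝ} (hs : s ∈ latentCosts ρ τ V β) :
    ‖c‖ * s ∈ latentCosts ρ τ V (c • β) := by
  obtain ⟨γ, hγ, hγV, rfl⟩ := hs
  refine ⟨c • γ, by simp [← smul_sum, hγ], fun j => (V j).smul_mem c (hγV j), ?_⟩
  simp only [mul_sum, Pi.smul_apply, map_smul_eq_mul]
  exact sum_congr rfl fun j _ => by ring

lemma exists_le_add_mem_latentCosts (hτ : ∀ j, 0 ≤ τ j) {β β' : E} {s t : ℝ}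
    (hs : s ∈ latentCosts ρ τ V β) (ht : t ∈ latentCosts ρ τ V β') :
    ∃ u ∈ latentCosts ρ τ V (β + β'), u ≤ s + t := by
  obtain ⟨γ, hγ, hγV, rfl⟩ := hs
  obtain ⟨δ, hδ, hδV, rfl⟩ := ht
  refine ⟨_, ⟨γ + δ, by simp [sum_add_distrib, hγ, hδ], fun j => add_mem (hγV j) (hδV j), rfl⟩, ?_⟩
  rw [← sum_add_distrib]
  gcongr with j
  simp only [Pi.add_apply, ← mul_add]
  exact mul_le_mul_of_nonneg_left (map_add_le_add ρ _ _) (hτ j)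

lemma latentNorm_zero (hτ : ∀ j, 0 ≤ τ j) : latentNorm ρ τ V 0 = 0 :=
  le_antisymm (csInf_le (bddBelow_latentCosts hτ 0) zero_mem_latentCosts_zero)
    (le_csInf ⟨0, zero_mem_latentCosts_zero⟩ fun _ => nonneg_of_mem_latentCosts hτ)

lemma latentNorm_smul_le (hτ : ∀ j, 0 ≤ τ j) (hV : ⨆ j, V j = ⊤) (c : 𝕜) (β : E) :
    latentNorm ρ τ V (c • β) ≤ ‖c‖ * latentNorm ρ τ V β := by
  rw [latentNorm, latentNorm, ← smul_eq_mul, ← Real.sInf_smul_of_nonneg (norm_nonneg c)]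
  refine csInf_le_csInf (bddBelow_latentCosts hτ _) ((latentCosts_nonempty hV β).image _) ?_
  rintro _ ⟨s, hs, rfl⟩
  exact smul_mem_latentCosts c hs

lemma latentNorm_add_le (hτ : ∀ j, 0 ≤ τ j) (hV : ⨆ j, V j = ⊤) (β β' : E) :
    latentNorm ρ τ V (β + β') ≤ latentNorm ρ τ V β + latentNorm ρ τ V β' := by
  rw [latentNorm, latentNorm, latentNorm, ← csInf_add (latentCosts_nonempty hV β)
    (bddBelow_latentCosts hτ β) (latentCosts_nonempty hV β') (bddBelow_latentCosts hτ β')]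
  refine le_csInf ((latentCosts_nonempty hV β).add (latentCosts_nonempty hV β')) ?_
  rintro _ ⟨s, hs, t, ht, rfl⟩
  obtain ⟨u, hu, hust⟩ := exists_le_add_mem_latentCosts hτ hs ht
  exact (csInf_le (bddBelow_latentCosts hτ _) hu).trans hust

noncomputable def latentSeminorm (hτ : ∀ j, 0 ≤ τ j) (hV : ⨆ j, V j = ⊤) : Seminorm 𝕜 E :=
  .ofSMulLE (latentNorm ρ τ V) (latentNorm_zero hτ) (latentNorm_add_le hτ hV)
    (latentNorm_smul_le hτ hV)

@[simp]
lemma coe_latentSeminorm (hτ : ∀ j, 0 ≤ τ j) (hV : ⨆ j, V j = ⊤) :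
    ⇑(latentSeminorm (ρ := ρ) hτ hV) = latentNorm ρ τ V :=
  rfl

lemma mul_le_latentNorm (hV : ⨆ j, V j = ⊤) {c : ℝ} (hc : 0 ≤ c) (hcτ : ∀ j, c ≤ τ j) (β : E) :
    c * ρ β ≤ latentNorm ρ τ V β := by
  refine le_csInf (latentCosts_nonempty hV β) ?_
  rintro _ ⟨γ, rfl, -, rfl⟩
  calc c * ρ (∑ j, γ j) ≤ c * ∑ j, ρ (γ j) := by
        gcongr; exact le_sum_of_subadditive ρ (map_zero ρ).le (map_add_le_add ρ) _ _
    _ = ∑ j, c * ρ (γ j) := mul_sum _ _ _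
    _ ≤ ∑ j, τ j * ρ (γ j) := by gcongr with j; exact hcτ j

lemma latentNorm_eq_zero_iff (hτ : ∀ j, 0 < τ j) (hV : ⨆ j, V j = ⊤)
    (hρ : ∀ x, ρ x = 0 → x = 0) {β : E} : latentNorm ρ τ V β = 0 ↔ β = 0 := by
  refine ⟨fun hβ => hρ β ?_, fun hβ => hβ ▸ latentNorm_zero fun j => (hτ j).le⟩
  obtain ⟨c, hc, hcτ⟩ : ∃ c > 0, ∀ j, c ≤ τ j := by
    cases isEmpty_or_nonempty ι
    · exact ⟨1, one_pos, isEmptyElim⟩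
    · obtain ⟨j₀, hj₀⟩ := Finite.exists_min τ
      exact ⟨τ j₀, hτ j₀, hj₀⟩
  have hcρ : c * ρ β ≤ 0 := hβ ▸ mul_le_latentNorm hV hc.le hcτ β
  exact le_antisymm (nonpos_of_mul_nonpos_right hcρ hc) (apply_nonneg ρ β)

end LatentNorm

lemma iSup_spanSubset_eq_top {R η ι : Type*} [Semiring R] [Finite η] {A : ι → Set η}
    (hA : ⋃ j, A j = Set.univ) : ⨆ j, Pi.spanSubset R (A j) = ⊤ := by
  simp only [Pi.spanSubset, ← Submodule.span_iUnion, ← Set.image_iUnion, hA, Set.image_univ,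
    Module.Basis.span_eq]

/-- The latent group lasso penalty `‖β‖_τ` is a norm on `ℝ^d`. -/
theorem stmt5 (d p : ℕ) (rho : (Fin d → ℝ) → ℝ)
    (hrho_add : ∀ x y, rho (x + y) ≤ rho x + rho y)
    (hrho_smul : ∀ (a : ℝ) x, rho (a • x) = |a| * rho x)
    (hrho_zero : ∀ x, rho x = 0 ↔ x = 0)
    (A : Fin p → Finset (Fin d)) (hcover : ∀ i, ∃ j, i ∈ A j)
    (tau : Fin p → ℝ) (htau : ∀ j, 0 < tau j)
    (N : (Fin d → ℝ) → ℝ)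
    (hN : ∀ β, N β = sInf {s : ℝ | ∃ γ : Fin p → (Fin d → ℝ),
      (∑ j, γ j) = β ∧ (∀ j i, i ∉ A j → γ j i = 0) ∧ s = ∑ j, tau j * rho (γ j)}) :
    (∀ β, 0 ≤ N β) ∧
    (∀ β, N β = 0 ↔ β = 0) ∧
    (∀ (a : ℝ) β, N (a • β) = |a| * N β) ∧
    (∀ β β', N (β + β') ≤ N β + N β') := by
  let ρ : Seminorm ℝ (Fin d → ℝ) := .of rho hrho_add (by simpa only [Real.norm_eq_abs])
  let V j : Submodule ℝ (Fin d → ℝ) := Pi.spanSubset ℝ (A j : Set (Fin d))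
  have hV : ⨆ j, V j = ⊤ :=
    iSup_spanSubset_eq_top (Set.eq_univ_of_forall fun i => by simpa using hcover i)
  obtain rfl : N = latentSeminorm (ρ := ρ) (fun j => (htau j).le) hV := by
    funext β
    simp only [hN, coe_latentSeminorm, latentNorm, latentCosts, V, Pi.mem_spanSubset_iff,
      Finset.mem_coe]
    rfl
  refine ⟨apply_nonneg _, fun β => latentNorm_eq_zero_iff htau hV fun x => (hrho_zero x).mp,
    fun a β => ?_, map_add_le_add _⟩
  rw [map_smul_eq_mul, Real.norm_eq_abs]
end

section
/- Let f(Δ) = (1/(2t))‖Δ − Δ_0‖_F² + λτη·log(1 + ‖Δ‖_F/η) for matrices Δ, with λtτ < η. Then any minimizer Δ* is a nonnegative scalar multiple of Δ_0, i.e., Δ* = c·Δ_0 for some c ∈ [0,1]. -/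
/-!
At a fixed norm ‖Δ‖ the log term is fixed, and the quadratic term is smallest on the ray through
Δ₀; so a minimizer attains equality in Cauchy–Schwarz against Δ₀ and is a nonnegative multiple of
it. If it were longer than Δ₀, moving to Δ₀ itself would kill the quadratic term without raising
the (monotone) log term, hence its multiple is at most 1.
-/

theorem norm_le_norm_of_forall_sq_norm_sub_add_le {E : Type*} [NormedAddCommGroup E] {a : ℝ}
    (ha : 0 < a) {h : ℝ → ℝ} (hh : MonotoneOn h (Set.Ici 0)) {x y : E}
    (hx : ∀ v : E, a * ‖x - y‖ ^ 2 + h ‖x‖ ≤ a * ‖v - y‖ ^ 2 + h ‖v‖) : ‖x‖ ≤ ‖y‖ := by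
  by_contra! hxy
  have hle : h ‖y‖ ≤ h ‖x‖ := hh (norm_nonneg y) (norm_nonneg x) hxy.le
  have hcmp := hx y
  rw [sub_self, norm_zero, zero_pow two_ne_zero, mul_zero, zero_add] at hcmp
  have hsq : ‖x - y‖ ^ 2 ≤ 0 := nonpos_of_mul_nonpos_right (by linarith) ha
  rw [sq_nonpos_iff, norm_eq_zero, sub_eq_zero] at hsq
  exact hxy.ne' (congrArg norm hsq)

theorem exists_mem_Icc_eq_smul_of_norm_smul_eq {E : Type*} [NormedAddCommGroup E]
    [NormedSpace ℝ E] {x y : E} (hxy : ‖y‖ • x = ‖x‖ • y)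
    (hle : ‖x‖ ≤ ‖y‖) : ∃ c ∈ Set.Icc (0 : ℝ) 1, x = c • y := by
  rcases eq_or_ne y 0 with rfl | hy
  · exact ⟨0, Set.left_mem_Icc.2 zero_le_one, by simpa using hle⟩
  have hy' : 0 < ‖y‖ := norm_pos_iff.2 hy
  refine ⟨‖x‖ / ‖y‖, ⟨by positivity, div_le_one_of_le₀ hle hy'.le⟩, ?_⟩
  rw [div_eq_inv_mul, mul_smul, ← hxy, smul_smul, inv_mul_cancel₀ hy'.ne', one_smul]

section InnerProductSpace

variable {E : Type*} [NormedAddCommGroup E] [InnerProductSpace ℝ E]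

theorem norm_smul_eq_norm_smul_of_forall_norm_eq {x y : E}
    (h : ∀ v : E, ‖v‖ = ‖x‖ → ‖x - y‖ ≤ ‖v - y‖) : ‖y‖ • x = ‖x‖ • y := by
  rcases eq_or_ne y 0 with rfl | hy
  · simp
  have hy' : ‖y‖ ≠ 0 := norm_ne_zero_iff.2 hy
  -- compare `x` with the point of its sphere on the ray through `y`
  have hv : ‖x - y‖ ≤ ‖(‖x‖ / ‖y‖) • y - y‖ :=
    h _ (by rw [norm_smul, Real.norm_of_nonneg (by positivity), div_mul_cancel₀ _ hy'])
  have hvy : ‖(‖x‖ / ‖y‖) • y - y‖ = |‖x‖ - ‖y‖| := by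
    rw [show (‖x‖ / ‖y‖) • y - y = (‖x‖ / ‖y‖ - 1) • y by rw [sub_smul, one_smul],
      norm_smul, Real.norm_eq_abs]
    conv_rhs => rw [← div_mul_cancel₀ ‖x‖ hy', ← sub_one_mul, abs_mul, abs_norm]
  have hsq : ‖x - y‖ ^ 2 ≤ (‖x‖ - ‖y‖) ^ 2 := by
    rw [← sq_abs (‖x‖ - ‖y‖), ← hvy]
    gcongr
  rw [← inner_eq_norm_mul_iff_real]
  refine le_antisymm (real_inner_le_norm x y) ?_
  rw [norm_sub_sq_real] at hsq
  nlinarith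

theorem exists_mem_Icc_eq_smul_of_forall_sq_norm_sub_add_le {a : ℝ} (ha : 0 < a) {h : ℝ → ℝ}
    (hh : MonotoneOn h (Set.Ici 0)) {x y : E}
    (hx : ∀ v : E, a * ‖x - y‖ ^ 2 + h ‖x‖ ≤ a * ‖v - y‖ ^ 2 + h ‖v‖) :
    ∃ c ∈ Set.Icc (0 : ℝ) 1, x = c • y := by
  refine exists_mem_Icc_eq_smul_of_norm_smul_eq (norm_smul_eq_norm_smul_of_forall_norm_eq
    fun v hv => ?_) (norm_le_norm_of_forall_sq_norm_sub_add_le ha hh hx)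
  have := hx v
  rw [hv] at this
  exact pow_le_pow_iff_left₀ (norm_nonneg _) (norm_nonneg _) two_ne_zero |>.1
    (le_of_mul_le_mul_left (by linarith) ha)

end InnerProductSpace

theorem monotoneOn_mul_log_one_add_div {C η : ℝ} (hC : 0 ≤ C) (hη : 0 < η) :
    MonotoneOn (fun r => C * Real.log (1 + r / η)) (Set.Ici 0) := by
  intro r (hr : 0 ≤ r) s _ hrs
  dsimp only
  gcongr

namespace Matrix

variable {m n : Type*} [Fintype m] [Fintype n]

def toEuclidean : Matrix m n ℝ ≃ₗ[ℝ] EuclideanSpace ℝ (m × n) :=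
  ((WithLp.linearEquiv 2 ℝ (m × n → ℝ)).trans (LinearEquiv.curry ℝ ℝ m n)).symm

theorem sqrt_sum_sq_eq_norm_toEuclidean (A : Matrix m n ℝ) :
    √(∑ i, ∑ j, A i j ^ 2) = ‖toEuclidean A‖ := by
  rw [EuclideanSpace.norm_eq, Fintype.sum_prod_type]
  simp only [Real.norm_eq_abs, sq_abs]
  rfl

end Matrix

theorem stmt12_general (p M : ℕ) (t lam tau eta : ℝ) (ht : 0 < t) (hlam : 0 < lam) (htau : 0 < tau)
    (heta : 0 < eta)
    (Δ0 : Matrix (Fin p) (Fin M) ℝ)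
    (f : Matrix (Fin p) (Fin M) ℝ → ℝ)
    (hf : ∀ Δ, f Δ = (1 / (2 * t)) * (Real.sqrt (∑ i, ∑ m, (Δ i m - Δ0 i m) ^ 2)) ^ 2 +
      lam * tau * eta * Real.log (1 + Real.sqrt (∑ i, ∑ m, (Δ i m) ^ 2) / eta))
    (Δstar : Matrix (Fin p) (Fin M) ℝ)
    (hmin : ∀ Δ, f Δstar ≤ f Δ) :
    ∃ c ∈ Set.Icc (0 : ℝ) 1, Δstar = c • Δ0 := by
  set e := Matrix.toEuclidean (m := Fin p) (n := Fin M)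
  have hfe : ∀ Δ, f Δ = (1 / (2 * t)) * ‖e Δ - e Δ0‖ ^ 2 +
      lam * tau * eta * Real.log (1 + ‖e Δ‖ / eta) := fun Δ => by
    rw [hf, ← map_sub, ← Matrix.sqrt_sum_sq_eq_norm_toEuclidean,
      ← Matrix.sqrt_sum_sq_eq_norm_toEuclidean]
    rfl
  obtain ⟨c, hc, hxc⟩ := exists_mem_Icc_eq_smul_of_forall_sq_norm_sub_add_le
    (by positivity : 0 < 1 / (2 * t))
    (monotoneOn_mul_log_one_add_div (by positivity : 0 ≤ lam * tau * eta) heta)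
    (x := e Δstar) (y := e Δ0) fun v => by
      simpa only [hfe, e.apply_symm_apply] using hmin (e.symm v)
  exact ⟨c, hc, e.injective (by rw [hxc, map_smul])⟩

/-- Any minimizer of the matrix log-sum proximal objective is a nonnegative scalar multiple
`c·Δ₀` with `c ∈ [0,1]`. -/
theorem stmt12 (p M : ℕ) (t lam tau eta : ℝ) (ht : 0 < t) (hlam : 0 < lam) (htau : 0 < tau)
    (heta : 0 < eta) (hlt : lam * t * tau < eta)
    (Δ0 : Matrix (Fin p) (Fin M) ℝ)
    (f : Matrix (Fin p) (Fin M) ℝ → ℝ)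
    (hf : ∀ Δ, f Δ = (1 / (2 * t)) * (Real.sqrt (∑ i, ∑ m, (Δ i m - Δ0 i m) ^ 2)) ^ 2 +
      lam * tau * eta * Real.log (1 + Real.sqrt (∑ i, ∑ m, (Δ i m) ^ 2) / eta))
    (Δstar : Matrix (Fin p) (Fin M) ℝ)
    (hmin : ∀ Δ, f Δstar ≤ f Δ) :
    ∃ c ∈ Set.Icc (0 : ℝ) 1, Δstar = c • Δ0 :=
  stmt12_general p M t lam tau eta ht hlam htau heta Δ0 f hf Δstar hmin
end
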